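/- For η = 0 and (δT,δX) ∈ ℕ², the dimension of the evaluation code C_0(δT,δX) equals (min(δT,q)+1)·(min(δX,q)+1). -/

import Mathlib

/-!
For `η = 0` the surface is `ℙ¹ × ℙ¹`, and a monomial of bidegree `(δT, δX)` evaluates to the
product of the binary form `T₁^(δT-c) T₂^c` on the first factor and `X₁^(δX-d) X₂^d` on the
second. On `ℙ¹(𝔽_q)` the relation `a^q = a` reduces the exponents of a form of degree `N` to
`0, …, min(N, q) - 1` and `N`. These are linearly independent: the value at `(0 : 1)` isolates
the exponent `N`, and a polynomial of degree `< q` vanishing on `𝔽_q` is zero. Products of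
independent families of functions on the two factors are again independent.
-/


open MvPolynomial

attribute [local instance] Classical.propDecidable

namespace Hirz

/-- Index type for the `(q+1)²` rational points of the Hirzebruch surface. -/
abbrev HIdx (F : Type) := (F × F) ⊕ F ⊕ F ⊕ Unit

variable (F : Type) [Field F] [Fintype F]

/-- The homogeneous coordinates of the rational points of `H_η`. -/
def pt : HIdx F → Fin 4 → F
  | Sum.inl (a, b) => ![1, a, 1, b]
  | Sum.inr (Sum.inl b) => ![0, 1, 1, b]
  | Sum.inr (Sum.inr (Sum.inl a)) => ![1, a, 0, 1]
  | Sum.inr (Sum.inr (Sum.inr _)) => ![0, 1, 0, 1]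

/-- Evaluation of a polynomial at all the rational points. -/
noncomputable def ev (P : MvPolynomial (Fin 4) F) : HIdx F → F :=
  fun i => eval (pt F i) P

/-- `c` is the exponent vector (T1,T2,X1,X2) of a monomial of bidegree `(δT, δX)`. -/
def IsBideg (η : ℕ) (δT : ℤ) (δX : ℕ) (c : Fin 4 → ℕ) : Prop :=
  (c 0 : ℤ) + (c 1 : ℤ) - (η : ℤ) * (c 2 : ℤ) = δT ∧ c 2 + c 3 = δX

/-- The monomial with exponent vector `c`. -/
noncomputable def mon (c : Fin 4 → ℕ) : MvPolynomial (Fin 4) F :=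
  monomial (Finsupp.equivFunOnFinite.symm c) (1 : F)

/-- The set of monomials of bidegree `(δT, δX)`. -/
def MSet (η : ℕ) (δT : ℤ) (δX : ℕ) : Set (MvPolynomial (Fin 4) F) :=
  {P | ∃ c : Fin 4 → ℕ, IsBideg η δT δX c ∧ P = mon F c}

/-- `R(δT,δX)`, the space of homogeneous polynomials of bidegree `(δT,δX)`. -/
noncomputable def RSpan (η : ℕ) (δT : ℤ) (δX : ℕ) : Submodule F (MvPolynomial (Fin 4) F) :=
  Submodule.span F (MSet F η δT δX)

/-- The code `C_η(δT,δX)`, image of `R(δT,δX)` under evaluation. -/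
noncomputable def Code (η : ℕ) (δT : ℤ) (δX : ℕ) : Submodule F (HIdx F → F) :=
  Submodule.span F (ev F '' MSet F η δT δX)

/-- Hamming weight. -/
noncomputable def wt (v : HIdx F → F) : ℕ := {i | v i ≠ 0}.ncard

/-- Minimum distance of `C_η(δT,δX)`. -/
noncomputable def dmin (η : ℕ) (δT : ℤ) (δX : ℕ) : ℕ :=
  sInf {w : ℕ | ∃ v ∈ Code F η δT δX, v ≠ 0 ∧ wt F v = w}

/-- `⌊A⌋` where `A = δX` if `δT ≥ 0` and `A = δ/η` otherwise. -/
def Afloor (η : ℕ) (δT : ℤ) (δX : ℕ) : ℤ :=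
  if 0 ≤ δT then (δX : ℤ) else (δT + (η : ℤ) * (δX : ℤ)) / (η : ℤ)

/-- Exponent vector of the monomial `M(d2,c2)`. -/
def Mexp (η : ℕ) (δT : ℤ) (δX : ℕ) (d2 c2 : ℕ) : Fin 4 → ℕ :=
  ![(δT + (η : ℤ) * ((δX : ℤ) - (d2 : ℤ)) - (c2 : ℤ)).toNat, c2, δX - d2, d2]

/-- The monomial `M(d2,c2) = T1^(δT+η(δX-d2)-c2) T2^c2 X1^(δX-d2) X2^d2`. -/
noncomputable def Mmon (η : ℕ) (δT : ℤ) (δX : ℕ) (d2 c2 : ℕ) : MvPolynomial (Fin 4) F :=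
  mon F (Mexp η δT δX d2 c2)

/-- The lattice polygon `P(δT,δX)`. -/
def PSet (η : ℕ) (δT : ℤ) (δX : ℕ) : Set (ℕ × ℕ) :=
  {p | (p.1 : ℤ) ≤ Afloor η δT δX ∧ (p.2 : ℤ) ≤ δT + (η : ℤ) * ((δX : ℤ) - (p.1 : ℤ))}

/-- The set `A_X = {α : α ≤ min(⌊A⌋, q-1)} ∪ ({A} ∩ ℕ)`. -/
def AX (η : ℕ) (δT : ℤ) (δX : ℕ) (q : ℕ) : Set ℕ :=
  {α | (α : ℤ) ≤ min (Afloor η δT δX) ((q : ℤ) - 1)} ∪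
    {α | if 0 ≤ δT then (α : ℤ) = (δX : ℤ)
         else (α : ℤ) * (η : ℤ) = δT + (η : ℤ) * (δX : ℤ)}

/-- The set of representatives `K(δT,δX)`. -/
def KSet (η : ℕ) (δT : ℤ) (δX : ℕ) (q : ℕ) : Set (ℕ × ℕ) :=
  {p | p.1 ∈ AX η δT δX q ∧
    ((p.2 : ℤ) ≤ min (δT + (η : ℤ) * (δX : ℤ) - (η : ℤ) * (p.1 : ℤ)) (q : ℤ) - 1 ∨
      (p.2 : ℤ) = δT + (η : ℤ) * (δX : ℤ) - (η : ℤ) * (p.1 : ℤ))}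

/-- Condition (H): `η ≥ 2`, `δT < 0`, `η ∣ δT` and `q ≤ δX + δT/η`. -/
def CondH (η : ℕ) (δT : ℤ) (δX : ℕ) (q : ℕ) : Prop :=
  2 ≤ η ∧ δT < 0 ∧ (η : ℤ) ∣ δT ∧ (q : ℤ) ≤ (δX : ℤ) + δT / (η : ℤ)

/-- `K*(δT,δX)`: `K(δT,δX)` minus `(δ/η, 0)` if (H) holds. -/
def KStar (η : ℕ) (δT : ℤ) (δX : ℕ) (q : ℕ) : Set (ℕ × ℕ) :=
  if CondH η δT δX q then
    KSet η δT δX q \ {(((δT + (η : ℤ) * (δX : ℤ)) / (η : ℤ)).toNat, 0)}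
  else KSet η δT δX q

/-- `Δ*(δT,δX) = {M(α,β) : (α,β) ∈ K*(δT,δX)}`. -/
noncomputable def DeltaStar (η : ℕ) (δT : ℤ) (δX : ℕ) (q : ℕ) :
    Set (MvPolynomial (Fin 4) F) :=
  {P | ∃ p ∈ KStar η δT δX q, P = Mmon F η δT δX p.1 p.2}

theorem _root_.LinearIndependent.mul_fst_snd {K α β ι κ : Type*} [CommRing K] [Fintype ι]
    [Fintype κ] {f : ι → α → K} {g : κ → β → K} (hf : LinearIndependent K f)
    (hg : LinearIndependent K g) :
    LinearIndependent K (fun p : ι × κ => fun xy : α × β => f p.1 xy.1 * g p.2 xy.2) := by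
  rw [Fintype.linearIndependent_iff] at hf hg ⊢
  intro μ hμ ⟨i, j⟩
  have hrow : ∀ y i, ∑ j, μ (i, j) * g j y = 0 := fun y =>
    hf _ <| funext fun x => by
      have := congrFun hμ (x, y)
      simp only [Finset.sum_apply, Pi.smul_apply, smul_eq_mul, Pi.zero_apply,
        Fintype.sum_prod_type, Finset.sum_mul] at this ⊢
      rw [← this]
      exact Finset.sum_congr rfl fun i _ => Finset.sum_congr rfl fun j _ => by ring
  exact hg (fun j => μ (i, j)) (funext fun y => by simpa using hrow y i) j

section ProjectiveLine

variable {K : Type} [Field K]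

abbrev ProjLine (K : Type) := K ⊕ Unit

/-- Value of the binary form `T₁^(N-c) T₂^c` at the points `(1 : a)` and `(0 : 1)`. -/
def formMonomial (N c : ℕ) : ProjLine K → K
  | Sum.inl a => a ^ c
  | Sum.inr _ => if c = N then 1 else 0

def exponentReps (N q : ℕ) : Finset ℕ := insert N (Finset.range (min N q))

lemma le_of_mem_exponentReps {N q c : ℕ} (hc : c ∈ exponentReps N q) : c ≤ N := by
  rcases Finset.mem_insert.1 hc with rfl | hc
  · exact le_rfl
  · exact ((Finset.mem_range.1 hc).trans_le (min_le_left _ _)).le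

lemma card_exponentReps (N q : ℕ) : (exponentReps N q).card = min N q + 1 := by
  rw [exponentReps, Finset.card_insert_of_notMem (by simp), Finset.card_range]

variable [Fintype K]

lemma formMonomial_eq_sub_card_add_one {N c : ℕ} (hc : Fintype.card K ≤ c) (hcN : c < N) :
    formMonomial (K := K) N c = formMonomial N (c - Fintype.card K + 1) := by
  funext x
  rcases x with a | _
  · calc a ^ c = a ^ (c - Fintype.card K) * a ^ Fintype.card K := by rw [← pow_add]; congr 1; omega
      _ = a ^ (c - Fintype.card K + 1) := by rw [FiniteField.pow_card, pow_succ]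
  · have : 0 < Fintype.card K := Fintype.card_pos
    simp only [formMonomial]
    rw [if_neg (by omega), if_neg (by omega)]

lemma exists_mem_exponentReps_formMonomial_eq {N c : ℕ} (hcN : c ≤ N) :
    ∃ c' ∈ exponentReps N (Fintype.card K), formMonomial (K := K) N c = formMonomial N c' := by
  have hq : 1 < Fintype.card K := Fintype.one_lt_card
  induction c using Nat.strong_induction_on with
  | _ c ih =>
    rcases hcN.eq_or_lt with rfl | hlt
    · exact ⟨c, Finset.mem_insert_self _ _, rfl⟩
    by_cases hcq : c < Fintype.card K
    · exact ⟨c, Finset.mem_insert_of_mem (Finset.mem_range.2 (lt_min hlt hcq)), rfl⟩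
    obtain ⟨c', hc', h⟩ := ih (c - Fintype.card K + 1) (by omega) (by omega)
    exact ⟨c', hc', (formMonomial_eq_sub_card_add_one (by omega) hlt).trans h⟩

lemma linearIndepOn_pow_range {m : ℕ} (hm : m ≤ Fintype.card K) :
    LinearIndepOn K (fun c (a : K) => a ^ c) ↑(Finset.range m) := by
  classical
  have hX : LinearIndepOn K (fun c => (Polynomial.X ^ c : Polynomial K)) ↑(Finset.range m) := by
    simpa [Polynomial.coe_basisMonomials, Polynomial.X_pow_eq_monomial] using
      (Polynomial.basisMonomials K).linearIndepOn (Finset.range m : Set ℕ)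
  have hspan : Submodule.span K ((fun c => (Polynomial.X ^ c : Polynomial K)) ''
      ↑(Finset.range m)) = Polynomial.degreeLT K m := by
    rw [Polynomial.degreeLT_eq_span_X_pow, Finset.coe_image]
  -- a polynomial of degree `< q` vanishing on `𝔽_q` is zero
  have hinj : Set.InjOn (LinearMap.pi fun a : K => Polynomial.leval a : Polynomial K →ₗ[K] K → K)
      (Submodule.span K ((fun c => (Polynomial.X ^ c : Polynomial K)) '' ↑(Finset.range m)) :
        Set (Polynomial K)) := by
    rw [hspan]
    intro p hp p' hp' h
    rw [← sub_eq_zero]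
    refine Polynomial.eq_zero_of_degree_lt_of_eval_finset_eq_zero Finset.univ ?_ fun a _ => ?_
    · refine (Polynomial.mem_degreeLT.1 (Submodule.sub_mem _ hp hp')).trans_le ?_
      exact_mod_cast hm
    · simpa [sub_eq_zero] using congrFun h a
  exact (hX.map_injOn _ hinj).congr fun c _ => funext fun a => by simp

lemma linearIndepOn_formMonomial_exponentReps (N : ℕ) :
    LinearIndepOn K (formMonomial (K := K) N) ↑(exponentReps N (Fintype.card K)) := by
  rw [exponentReps, Finset.coe_insert, linearIndepOn_insert (by simp)]
  constructor
  · exact LinearIndepOn.of_comp (LinearMap.funLeft K K (Sum.inl : K → ProjLine K))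
      (linearIndepOn_pow_range (min_le_right _ _))
  · -- evaluation at `(0 : 1)` kills the other exponents but not `N`
    intro h
    have hle : Submodule.span K (formMonomial N '' ↑(Finset.range (min N (Fintype.card K)))) ≤
        LinearMap.ker (LinearMap.proj (R := K) (φ := fun _ : ProjLine K => K) (Sum.inr ())) := by
      rw [Submodule.span_le]
      rintro _ ⟨c, hc, rfl⟩
      have : c < N := (Finset.mem_range.1 hc).trans_le (min_le_left _ _)
      simp [formMonomial, this.ne]
    simpa [formMonomial] using hle h

end ProjectiveLine

/-- For `η = 0` the surface is `ℙ¹ × ℙ¹`, with `(t₁, t₂, x₁, x₂)` the point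
`((t₁ : t₂), (x₁ : x₂))`. -/
def toProjLinePair (K : Type) : HIdx K → ProjLine K × ProjLine K
  | Sum.inl (a, b) => (Sum.inl a, Sum.inl b)
  | Sum.inr (Sum.inl b) => (Sum.inr (), Sum.inl b)
  | Sum.inr (Sum.inr (Sum.inl a)) => (Sum.inl a, Sum.inr ())
  | Sum.inr (Sum.inr (Sum.inr _)) => (Sum.inr (), Sum.inr ())

lemma toProjLinePair_surjective (K : Type) : Function.Surjective (toProjLinePair K) := by
  rintro ⟨a | ⟨⟩, b | ⟨⟩⟩
  exacts [⟨Sum.inl (a, b), rfl⟩, ⟨Sum.inr (Sum.inr (Sum.inl a)), rfl⟩,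
    ⟨Sum.inr (Sum.inl b), rfl⟩, ⟨Sum.inr (Sum.inr (Sum.inr ())), rfl⟩]

section BidegreeZero

variable {K : Type} [Field K]

def formMonomialPair (δT δX : ℕ) (p : ℕ × ℕ) (k : HIdx K) : K :=
  formMonomial δT p.1 (toProjLinePair K k).1 * formMonomial δX p.2 (toProjLinePair K k).2

lemma eval_mon (x : Fin 4 → K) (c : Fin 4 → ℕ) :
    eval x (mon K c) = x 0 ^ c 0 * x 1 ^ c 1 * x 2 ^ c 2 * x 3 ^ c 3 := by
  rw [mon, eval_monomial, Finsupp.prod_fintype _ _ fun _ => pow_zero _]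
  simp [Fin.prod_univ_four, mul_assoc]

lemma ev_mon_of_isBideg_zero {δT δX : ℕ} {c : Fin 4 → ℕ} (hc : IsBideg 0 δT δX c) :
    ev K (mon K c) = formMonomialPair δT δX (c 1, c 3) := by
  obtain ⟨hT, hX⟩ := hc
  have hT' : c 0 + c 1 = δT := by push_cast at hT; omega
  have zero_pow_T : (0 : K) ^ c 0 = if c 1 = δT then 1 else 0 := by
    rw [zero_pow_eq]; congr 1; simp only [eq_iff_iff]; omega
  have zero_pow_X : (0 : K) ^ c 2 = if c 3 = δX then 1 else 0 := by
    rw [zero_pow_eq]; congr 1; simp only [eq_iff_iff]; omega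
  funext k
  rcases k with ⟨a, b⟩ | b | a | ⟨⟩ <;>
    simp [ev, pt, formMonomialPair, toProjLinePair, formMonomial, eval_mon, zero_pow_T,
      zero_pow_X]

variable [Fintype K]

lemma ev_image_MSet_zero (δT δX : ℕ) :
    ev K '' MSet K 0 δT δX = Set.range fun p : exponentReps δT (Fintype.card K) ×
        exponentReps δX (Fintype.card K) => formMonomialPair δT δX (p.1, p.2) := by
  ext v
  constructor
  · rintro ⟨_, ⟨c, hc, rfl⟩, rfl⟩
    obtain ⟨i, hi, hci⟩ := exists_mem_exponentReps_formMonomial_eq (K := K) (N := δT) (c := c 1)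
      (by have := hc.1; push_cast at this; omega)
    obtain ⟨j, hj, hcj⟩ := exists_mem_exponentReps_formMonomial_eq (K := K) (N := δX) (c := c 3)
      (by have := hc.2; omega)
    refine ⟨(⟨i, hi⟩, ⟨j, hj⟩), ?_⟩
    rw [ev_mon_of_isBideg_zero hc]
    unfold formMonomialPair
    rw [hci, hcj]
  · rintro ⟨⟨⟨i, hi⟩, ⟨j, hj⟩⟩, rfl⟩
    have hiT := le_of_mem_exponentReps hi
    have hjX := le_of_mem_exponentReps hj
    have hc : IsBideg 0 δT δX ![δT - i, i, δX - j, j] := by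
      refine ⟨?_, ?_⟩ <;> simp <;> omega
    exact ⟨_, ⟨_, hc, rfl⟩, ev_mon_of_isBideg_zero hc⟩

lemma linearIndependent_formMonomialPair (δT δX : ℕ) :
    LinearIndependent K fun p : exponentReps δT (Fintype.card K) ×
        exponentReps δX (Fintype.card K) => formMonomialPair (K := K) δT δX (p.1, p.2) := by
  have hT : LinearIndependent K fun c : exponentReps δT (Fintype.card K) => formMonomial δT c :=
    linearIndepOn_formMonomial_exponentReps δT
  have hX : LinearIndependent K fun c : exponentReps δX (Fintype.card K) => formMonomial δX c :=
    linearIndepOn_formMonomial_exponentReps δX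
  have hinj := LinearMap.funLeft_injective_of_surjective K K _ (toProjLinePair_surjective K)
  have hprod := (hT.mul_fst_snd hX).map' _ (LinearMap.ker_eq_bot.2 hinj)
  exact hprod

end BidegreeZero

/-- for `η = 0`, `dim C_0(δT,δX) = (min(δT,q)+1)(min(δX,q)+1)`. -/
theorem statement7 (δT δX : ℕ) :
    Module.finrank F (Code F 0 (δT : ℤ) δX) =
      (min δT (Fintype.card F) + 1) * (min δX (Fintype.card F) + 1) := by
  rw [Code, ev_image_MSet_zero, finrank_span_eq_card (linearIndependent_formMonomialPair δT δX),
    Fintype.card_prod, Fintype.card_coe, Fintype.card_coe, card_exponentReps, card_exponentReps]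

end Hirz
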